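/- Let Z : [0,1] → ℝ be continuous with Z(0) = Z(1), and suppose Z is α-Hölder continuous with constant c > 0, i.e. |Z(u) − Z(v)| ≤ c·|u − v|^α for all u,v ∈ [0,1], where α ∈ (0,1]. Then for every t ∈ [0,1] and every r > 0, the Lebesgue measure of the set { s ∈ [0,1] : D(s,t) ≤ r } is at least min(1, (r/(2c))^{1/α}). -/
import Mathlib


/-- The cyclic interval `[s,t]` in `[0,1]`. -/
def cyclInt (s t : ℝ) : Set ℝ :=
  if s ≤ t then Set.Icc s t else Set.Icc s 1 ∪ Set.Icc 0 t

/-- `D°(s,t) = Z(s) + Z(t) - 2 max( min_{[s,t]} Z, min_{[t,s]} Z )`. -/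
noncomputable def Dcirc (Z : ℝ → ℝ) (s t : ℝ) : ℝ :=
  Z s + Z t - 2 * max (sInf (Z '' cyclInt s t)) (sInf (Z '' cyclInt t s))

/-- `D(s,t)`, the infimum over finite chains in `[0,1]` of sums of `D°`-increments. -/
noncomputable def Dmap (Z : ℝ → ℝ) (s t : ℝ) : ℝ :=
  sInf {x | ∃ k : ℕ, 1 ≤ k ∧ ∃ f : ℕ → ℝ,
    (∀ i ≤ k, f i ∈ Set.Icc (0:ℝ) 1) ∧ f 0 = s ∧ f k = t ∧
    x = ∑ i ∈ Finset.range k, Dcirc Z (f i) (f (i + 1))}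

lemma cyclInt_subset {u v : ℝ} (hu : u ∈ Set.Icc (0:ℝ) 1) (hv : v ∈ Set.Icc (0:ℝ) 1) :
    cyclInt u v ⊆ Set.Icc 0 1 := by
  unfold cyclInt
  split_ifs
  · exact Set.Icc_subset_Icc hu.1 hv.2
  · exact Set.union_subset (Set.Icc_subset_Icc hu.1 le_rfl) (Set.Icc_subset_Icc le_rfl hv.2)

lemma left_mem_cyclInt {u v : ℝ} (hu : u ∈ Set.Icc (0:ℝ) 1) (hv : v ∈ Set.Icc (0:ℝ) 1) :
    u ∈ cyclInt u v := by
  unfold cyclInt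
  split_ifs with h
  · exact ⟨le_rfl, h⟩
  · exact Or.inl ⟨le_rfl, hu.2⟩

lemma right_mem_cyclInt {u v : ℝ} (hu : u ∈ Set.Icc (0:ℝ) 1) (hv : v ∈ Set.Icc (0:ℝ) 1) :
    v ∈ cyclInt u v := by
  unfold cyclInt
  split_ifs with h
  · exact ⟨h, le_rfl⟩
  · exact Or.inr ⟨hv.1, le_rfl⟩

section Aux

variable {Z : ℝ → ℝ} {α c : ℝ} (hα : 0 < α) (hc : 0 < c)
  (hHolder : ∀ u ∈ Set.Icc (0:ℝ) 1, ∀ v ∈ Set.Icc (0:ℝ) 1,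
      |Z u - Z v| ≤ c * |u - v| ^ α)

include hα hc hHolder

lemma Z_lower {x : ℝ} (hx : x ∈ Set.Icc (0:ℝ) 1) : Z 0 - c ≤ Z x := by
  have h := hHolder 0 (by norm_num) x hx
  have h1 : |(0:ℝ) - x| ^ α ≤ 1 := by
    apply Real.rpow_le_one (abs_nonneg _) _ hα.le
    rw [zero_sub, abs_neg, abs_of_nonneg hx.1]
    exact hx.2
  have h2 : c * |(0:ℝ) - x| ^ α ≤ c := by nlinarith
  have := (abs_le.mp (h.trans h2)).2
  linarith

lemma bddBelow_image {S : Set ℝ} (hS : S ⊆ Set.Icc 0 1) : BddBelow (Z '' S) := by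
  refine ⟨Z 0 - c, ?_⟩
  rintro _ ⟨x, hx, rfl⟩
  exact Z_lower hα hc hHolder (hS hx)

lemma Dcirc_nonneg {u v : ℝ} (hu : u ∈ Set.Icc (0:ℝ) 1) (hv : v ∈ Set.Icc (0:ℝ) 1) :
    0 ≤ Dcirc Z u v := by
  have bA : BddBelow (Z '' cyclInt u v) := bddBelow_image hα hc hHolder (cyclInt_subset hu hv)
  have bB : BddBelow (Z '' cyclInt v u) := bddBelow_image hα hc hHolder (cyclInt_subset hv hu)
  have hAu : sInf (Z '' cyclInt u v) ≤ Z u := csInf_le bA ⟨u, left_mem_cyclInt hu hv, rfl⟩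
  have hAv : sInf (Z '' cyclInt u v) ≤ Z v := csInf_le bA ⟨v, right_mem_cyclInt hu hv, rfl⟩
  have hBu : sInf (Z '' cyclInt v u) ≤ Z u := csInf_le bB ⟨u, right_mem_cyclInt hv hu, rfl⟩
  have hBv : sInf (Z '' cyclInt v u) ≤ Z v := csInf_le bB ⟨v, left_mem_cyclInt hv hu, rfl⟩
  have : max (sInf (Z '' cyclInt u v)) (sInf (Z '' cyclInt v u)) ≤ (Z u + Z v) / 2 :=
    max_le (by linarith) (by linarith)
  unfold Dcirc
  linarith

lemma sInf_Icc_lower {u v : ℝ} (huv : u ≤ v) (hu : u ∈ Set.Icc (0:ℝ) 1)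
    (hv : v ∈ Set.Icc (0:ℝ) 1) :
    (Z u + Z v) / 2 - c * (v - u) ^ α ≤ sInf (Z '' Set.Icc u v) := by
  refine le_csInf ⟨Z u, ⟨u, ⟨le_rfl, huv⟩, rfl⟩⟩ ?_
  rintro _ ⟨x, ⟨hx1, hx2⟩, rfl⟩
  have hxI : x ∈ Set.Icc (0:ℝ) 1 := ⟨hu.1.trans hx1, hx2.trans hv.2⟩
  have h1 := hHolder u hu x hxI
  have h2 := hHolder v hv x hxI
  have e1 : |u - x| ^ α ≤ (v - u) ^ α := by
    apply Real.rpow_le_rpow (abs_nonneg _) _ hα.le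
    rw [abs_of_nonpos (by linarith)]; linarith
  have e2 : |v - x| ^ α ≤ (v - u) ^ α := by
    apply Real.rpow_le_rpow (abs_nonneg _) _ hα.le
    rw [abs_of_nonneg (by linarith)]; linarith
  have h1' : Z u - Z x ≤ c * (v - u) ^ α := by
    have := (abs_le.mp h1).2
    nlinarith
  have h2' : Z v - Z x ≤ c * (v - u) ^ α := by
    have := (abs_le.mp h2).2
    nlinarith
  linarith

lemma Dcirc_le {u v : ℝ} (hu : u ∈ Set.Icc (0:ℝ) 1) (hv : v ∈ Set.Icc (0:ℝ) 1) :
    Dcirc Z u v ≤ 2 * c * |u - v| ^ α := by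
  unfold Dcirc
  rcases le_total u v with h | h
  · have hI : cyclInt u v = Set.Icc u v := if_pos h
    have hlow := sInf_Icc_lower hα hc hHolder h hu hv
    rw [← hI] at hlow
    have : (Z u + Z v) / 2 - c * (v - u) ^ α ≤
        max (sInf (Z '' cyclInt u v)) (sInf (Z '' cyclInt v u)) :=
      hlow.trans (le_max_left _ _)
    have habs : |u - v| = v - u := by rw [abs_of_nonpos (by linarith)]; ring
    rw [habs]; linarith
  · have hI : cyclInt v u = Set.Icc v u := if_pos h
    have hlow := sInf_Icc_lower hα hc hHolder h hv hu
    rw [← hI] at hlow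
    have : (Z v + Z u) / 2 - c * (u - v) ^ α ≤
        max (sInf (Z '' cyclInt u v)) (sInf (Z '' cyclInt v u)) :=
      hlow.trans (le_max_right _ _)
    have habs : |u - v| = u - v := abs_of_nonneg (by linarith)
    rw [habs]; linarith

lemma Dmap_le_Dcirc {s t : ℝ} (hs : s ∈ Set.Icc (0:ℝ) 1) (ht : t ∈ Set.Icc (0:ℝ) 1) :
    Dmap Z s t ≤ Dcirc Z s t := by
  apply csInf_le
  · refine ⟨0, ?_⟩
    rintro x ⟨k, hk, f, hf, h0, hk', rfl⟩
    apply Finset.sum_nonneg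
    intro i hi
    have hi' := Finset.mem_range.mp hi
    exact Dcirc_nonneg hα hc hHolder (hf i (by omega)) (hf (i + 1) (by omega))
  · refine ⟨1, le_rfl, fun i => if i = 0 then s else t, ?_, by simp, by simp, ?_⟩
    · intro i _
      by_cases h : i = 0 <;> simp [h, hs, ht]
    · simp [Finset.sum_range_one]

end Aux

theorem volume_ball_lower_bound
    (Z : ℝ → ℝ) (hcont : ContinuousOn Z (Set.Icc 0 1)) (hZ : Z 0 = Z 1)
    (α c : ℝ) (hα : 0 < α) (hα1 : α ≤ 1) (hc : 0 < c)
    (hHolder : ∀ u ∈ Set.Icc (0:ℝ) 1, ∀ v ∈ Set.Icc (0:ℝ) 1,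
      |Z u - Z v| ≤ c * |u - v| ^ α)
    (t : ℝ) (ht : t ∈ Set.Icc (0:ℝ) 1) (r : ℝ) (hr : 0 < r) :
    ENNReal.ofReal (min 1 ((r / (2 * c)) ^ (1 / α))) ≤
      MeasureTheory.volume {s ∈ Set.Icc (0:ℝ) 1 | Dmap Z s t ≤ r} := by
  set δ : ℝ := (r / (2 * c)) ^ (1 / α) with hδdef
  have hx : 0 < r / (2 * c) := div_pos hr (by positivity)
  have hδ : 0 < δ := Real.rpow_pos_of_pos hx _
  have hδα : δ ^ α = r / (2 * c) := by
    rw [hδdef, ← Real.rpow_mul hx.le, one_div_mul_cancel hα.ne', Real.rpow_one]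
  have hsub : Set.Icc (max 0 (t - δ)) (min 1 (t + δ)) ⊆
      {s ∈ Set.Icc (0:ℝ) 1 | Dmap Z s t ≤ r} := by
    intro s hs
    have hs0 : (0:ℝ) ≤ s := le_trans (le_max_left _ _) hs.1
    have hs1 : s ≤ 1 := le_trans hs.2 (min_le_left _ _)
    have hsI : s ∈ Set.Icc (0:ℝ) 1 := ⟨hs0, hs1⟩
    have habs : |s - t| ≤ δ := by
      rw [abs_le]
      constructor
      · have := le_trans (le_max_right 0 (t - δ)) hs.1; linarith
      · have := le_trans hs.2 (min_le_right 1 (t + δ)); linarith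
    have h1 : |s - t| ^ α ≤ δ ^ α := Real.rpow_le_rpow (abs_nonneg _) habs hα.le
    have h2 : 2 * c * |s - t| ^ α ≤ r := by
      rw [hδα] at h1
      have : 2 * c * |s - t| ^ α ≤ 2 * c * (r / (2 * c)) := by nlinarith
      rwa [mul_div_cancel₀ r (by positivity)] at this
    refine ⟨hsI, le_trans (Dmap_le_Dcirc hα hc hHolder hsI ht) ?_⟩
    exact le_trans (Dcirc_le hα hc hHolder hsI ht) h2
  calc ENNReal.ofReal (min 1 δ)
      ≤ ENNReal.ofReal (min 1 (t + δ) - max 0 (t - δ)) := by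
        apply ENNReal.ofReal_le_ofReal
        rcases le_total (t + δ) 1 with h1 | h1 <;> rcases le_total 0 (t - δ) with h2 | h2
        · rw [min_eq_right h1, max_eq_right h2]
          have := min_le_right (1:ℝ) δ; linarith
        · rw [min_eq_right h1, max_eq_left h2]
          have := min_le_right (1:ℝ) δ; have := ht.1; linarith
        · rw [min_eq_left h1, max_eq_right h2]
          have := min_le_right (1:ℝ) δ; have := ht.2; linarith
        · rw [min_eq_left h1, max_eq_left h2]
          have := min_le_left (1:ℝ) δ; linarith
    _ = MeasureTheory.volume (Set.Icc (max 0 (t - δ)) (min 1 (t + δ))) := by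
        rw [Real.volume_Icc]
    _ ≤ MeasureTheory.volume {s ∈ Set.Icc (0:ℝ) 1 | Dmap Z s t ≤ r} :=
        MeasureTheory.measure_mono hsub
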